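/- Let t ≥ 4 and consider the graph obtained from a path B on vertices b_1, …, b_6 (in order) together with four additional vertices v_1, v_2, v_3, v_4, where each v_i is adjacent to every b_j (1 ≤ i ≤ 4, 1 ≤ j ≤ 6). This graph has a K_6 minor. -/
import Mathlib


open SimpleGraph

/-- `H` is a minor of `G`: branch sets. -/
def HasMinor {V : Type*} {W : Type*} (G : SimpleGraph V) (H : SimpleGraph W) : Prop :=
  ∃ B : W → Set V,
    (∀ w, (B w).Nonempty) ∧
    (∀ w, (G.induce (B w)).Connected) ∧
    (∀ w₁ w₂, w₁ ≠ w₂ → Disjoint (B w₁) (B w₂)) ∧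
    (∀ w₁ w₂, H.Adj w₁ w₂ → ∃ v₁ ∈ B w₁, ∃ v₂ ∈ B w₂, G.Adj v₁ v₂)

/-- Planarity, via Wagner's theorem: no `K₅` and no `K₃,₃` minor. -/
def IsPlanar {V : Type*} (G : SimpleGraph V) : Prop :=
  ¬ HasMinor G (⊤ : SimpleGraph (Fin 5)) ∧
  ¬ HasMinor G (completeBipartiteGraph (Fin 3) (Fin 3))

/-- A graph is apex if deleting some vertex leaves a planar graph. -/
def IsApex {V : Type*} (G : SimpleGraph V) : Prop :=
  ∃ v : V, IsPlanar (G.induce {u | u ≠ v})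

/-- `G` is `k`-connected. -/
def IsKConnected {V : Type*} [Fintype V] (k : ℕ) (G : SimpleGraph V) : Prop :=
  k < Fintype.card V ∧ ∀ X : Set V, X.ncard < k → (G.induce Xᶜ).Connected

/-- add an apex vertex over the set `S`. -/
def addApex {V : Type*} (G : SimpleGraph V) (S : Set V) : SimpleGraph (Option V) :=
  SimpleGraph.fromRel fun a b =>
    match a, b with
    | some u, some v => G.Adj u v
    | none, some v => v ∈ S
    | _, _ => False

/-- The graph on b_1,…,b_6 (a path, in order) and v_1,…,v_4, each v_i adjacent
to every b_j. -/
def pathPlusFour : SimpleGraph (Fin 4 ⊕ Fin 6) :=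
  SimpleGraph.fromRel fun a b =>
    match a, b with
    | .inl _, .inr _ => True
    | .inr i, .inr j => (i : ℕ) + 1 = (j : ℕ)
    | _, _ => False

instance : DecidableRel pathPlusFour.Adj := fun a b => by
  rcases a with i | i <;> rcases b with j | j <;>
    · unfold pathPlusFour
      rw [SimpleGraph.fromRel_adj]
      dsimp only
      infer_instance

def myB : Fin 6 → Set (Fin 4 ⊕ Fin 6)
  | 0 => {.inl 0, .inr 0}
  | 1 => {.inl 1, .inr 1}
  | 2 => {.inl 2, .inr 2}
  | 3 => {.inl 3, .inr 3}
  | 4 => {.inr 4}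
  | 5 => {.inr 5}

lemma singleton_connected {V : Type*} (G : SimpleGraph V) (a : V) :
    (G.induce {a}).Connected := by
  rw [connected_iff]
  refine ⟨fun x y => ?_, ⟨⟨a, rfl⟩⟩⟩
  have : x = y := Subtype.ext (x.2.trans y.2.symm)
  exact this ▸ Reachable.refl x

lemma pair_connected {V : Type*} (G : SimpleGraph V) (a b : V) (h : G.Adj a b) :
    (G.induce {a, b}).Connected := by
  rw [connected_iff]
  refine ⟨fun x y => ?_, ⟨⟨a, Or.inl rfl⟩⟩⟩
  have key : ∀ z : {v // v ∈ ({a, b} : Set V)},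
      (G.induce {a, b}).Reachable ⟨a, Or.inl rfl⟩ z := by
    intro z
    rcases z.2 with hz | hz
    · exact (Subtype.ext hz.symm : (⟨a, Or.inl rfl⟩ : {v // v ∈ ({a,b}:Set V)}) = z) ▸
        Reachable.refl _
    · refine Adj.reachable ?_
      show G.Adj a z.val
      rw [hz]; exact h
  exact (key x).symm.trans (key y)

/-- for t ≥ 4, this graph has a K₆ minor. -/
theorem pathPlusFour_hasK6Minor (t : ℕ) (ht : 4 ≤ t) :
    HasMinor pathPlusFour (⊤ : SimpleGraph (Fin 6)) := by
  refine ⟨myB, ?_, ?_, ?_, ?_⟩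
  · intro w
    fin_cases w
    · exact ⟨.inl 0, Or.inl rfl⟩
    · exact ⟨.inl 1, Or.inl rfl⟩
    · exact ⟨.inl 2, Or.inl rfl⟩
    · exact ⟨.inl 3, Or.inl rfl⟩
    · exact ⟨.inr 4, rfl⟩
    · exact ⟨.inr 5, rfl⟩
  · intro w
    fin_cases w
    · exact pair_connected _ _ _ (by decide)
    · exact pair_connected _ _ _ (by decide)
    · exact pair_connected _ _ _ (by decide)
    · exact pair_connected _ _ _ (by decide)
    · exact singleton_connected _ _
    · exact singleton_connected _ _
  · intro w₁ w₂ hne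
    fin_cases w₁ <;> fin_cases w₂ <;>
      first
        | exact absurd rfl hne
        | (rw [Set.disjoint_left]; intro a ha hb;
           simp only [myB, Set.mem_insert_iff, Set.mem_singleton_iff] at ha hb;
           rcases ha with rfl | rfl <;> rcases hb with h | h <;> simp_all)
  · intro w₁ w₂ h
    have hne : w₁ ≠ w₂ := h.ne
    fin_cases w₁ <;> fin_cases w₂
    · exact absurd rfl hne
    · exact ⟨.inl 0, Or.inl rfl, .inr 1, Or.inr rfl, by decide⟩
    · exact ⟨.inl 0, Or.inl rfl, .inr 2, Or.inr rfl, by decide⟩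
    · exact ⟨.inl 0, Or.inl rfl, .inr 3, Or.inr rfl, by decide⟩
    · exact ⟨.inl 0, Or.inl rfl, .inr 4, rfl, by decide⟩
    · exact ⟨.inl 0, Or.inl rfl, .inr 5, rfl, by decide⟩
    · exact ⟨.inl 1, Or.inl rfl, .inr 0, Or.inr rfl, by decide⟩
    · exact absurd rfl hne
    · exact ⟨.inl 1, Or.inl rfl, .inr 2, Or.inr rfl, by decide⟩
    · exact ⟨.inl 1, Or.inl rfl, .inr 3, Or.inr rfl, by decide⟩
    · exact ⟨.inl 1, Or.inl rfl, .inr 4, rfl, by decide⟩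
    · exact ⟨.inl 1, Or.inl rfl, .inr 5, rfl, by decide⟩
    · exact ⟨.inl 2, Or.inl rfl, .inr 0, Or.inr rfl, by decide⟩
    · exact ⟨.inl 2, Or.inl rfl, .inr 1, Or.inr rfl, by decide⟩
    · exact absurd rfl hne
    · exact ⟨.inl 2, Or.inl rfl, .inr 3, Or.inr rfl, by decide⟩
    · exact ⟨.inl 2, Or.inl rfl, .inr 4, rfl, by decide⟩
    · exact ⟨.inl 2, Or.inl rfl, .inr 5, rfl, by decide⟩
    · exact ⟨.inl 3, Or.inl rfl, .inr 0, Or.inr rfl, by decide⟩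
    · exact ⟨.inl 3, Or.inl rfl, .inr 1, Or.inr rfl, by decide⟩
    · exact ⟨.inl 3, Or.inl rfl, .inr 2, Or.inr rfl, by decide⟩
    · exact absurd rfl hne
    · exact ⟨.inl 3, Or.inl rfl, .inr 4, rfl, by decide⟩
    · exact ⟨.inl 3, Or.inl rfl, .inr 5, rfl, by decide⟩
    · exact ⟨.inr 4, rfl, .inl 0, Or.inl rfl, by decide⟩
    · exact ⟨.inr 4, rfl, .inl 1, Or.inl rfl, by decide⟩
    · exact ⟨.inr 4, rfl, .inl 2, Or.inl rfl, by decide⟩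
    · exact ⟨.inr 4, rfl, .inl 3, Or.inl rfl, by decide⟩
    · exact absurd rfl hne
    · exact ⟨.inr 4, rfl, .inr 5, rfl, by decide⟩
    · exact ⟨.inr 5, rfl, .inl 0, Or.inl rfl, by decide⟩
    · exact ⟨.inr 5, rfl, .inl 1, Or.inl rfl, by decide⟩
    · exact ⟨.inr 5, rfl, .inl 2, Or.inl rfl, by decide⟩
    · exact ⟨.inr 5, rfl, .inl 3, Or.inl rfl, by decide⟩
    · exact ⟨.inr 5, rfl, .inr 4, rfl, by decide⟩
    · exact absurd rfl hne
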